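/- Let A be an n×m real matrix with no zero rows and no zero columns, and let k : Fin n → ℕ₊ and l : Fin m → ℕ₊. Let A' be the split matrix of A with multiplicities k and l (rows indexed by (i,s), s ∈ Fin k_i, columns by (j,t), t ∈ Fin l_j, entry a_{ij}/(k_i·l_j)). Then ‖A'‖_G = ‖A‖_G, where ‖·‖_G is the Grothendieck norm. -/

import Mathlib

open scoped BigOperators

/-- The ℓ²→ℓ² operator norm of a real matrix. -/
noncomputable def l2OpNorm {α β : Type*} [Fintype α] [Fintype β] [DecidableEq β]
    (A : Matrix α β ℝ) : ℝ :=
  ‖LinearMap.toContinuousLinearMap (Matrix.toEuclideanLin A)‖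

/-- The ∞→1 norm of a real matrix: `max_{x ∈ {-1,1}ⁿ, y ∈ {-1,1}^m} xᵀ A y`. -/
noncomputable def normInftyOne {α β : Type*} [Fintype α] [Fintype β] (A : Matrix α β ℝ) : ℝ :=
  ⨆ p : (α → Bool) × (β → Bool),
    ∑ i, ∑ j, (if p.1 i then (1:ℝ) else -1) * A i j * (if p.2 j then (1:ℝ) else -1)

/-- The Grothendieck norm: sup over `k` and families of unit vectors of `Σ a_{ij} ⟨p_i, q_j⟩`. -/
noncomputable def grothendieckNorm {α β : Type*} [Fintype α] [Fintype β]
    (A : Matrix α β ℝ) : ℝ :=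
  sSup { r : ℝ | ∃ (k : ℕ) (p : α → EuclideanSpace ℝ (Fin k)) (q : β → EuclideanSpace ℝ (Fin k)),
    (∀ i, ‖p i‖ = 1) ∧ (∀ j, ‖q j‖ = 1) ∧
    r = ∑ i, ∑ j, A i j * (inner ℝ (p i) (q j) : ℝ) }

/-- The matrix obtained from `A` by splitting row `i` into `k i` equal rows and
column `j` into `l j` equal columns. -/
noncomputable def splitMatrix {n m : ℕ} (A : Matrix (Fin n) (Fin m) ℝ)
    (k : Fin n → ℕ+) (l : Fin m → ℕ+) :
    Matrix ((i : Fin n) × Fin (k i : ℕ)) ((j : Fin m) × Fin (l j : ℕ)) ℝ :=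
  fun p q => A p.1 q.1 / (((k p.1 : ℕ) : ℝ) * ((l q.1 : ℕ) : ℝ))

/-! Averaging the unit vectors attached to the copies of a row (column) of the split matrix gives
vectors of norm at most `1` that realise the same value for `A`; padding them with `√(1 - ‖u‖²)`
in one of two fresh coordinates, the first for rows and the second for columns, turns them back
into unit vectors without changing any inner product between a row and a column vector.
Conversely, giving every copy of a row (column) the vector of the original row (column)
realises each value of `A` for the split matrix. -/

section Padding

variable {d : ℕ}

noncomputable def padToUnit (u : EuclideanSpace ℝ (Fin d)) (c : Fin 2) :
    EuclideanSpace ℝ (Fin (d + 2)) :=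
  WithLp.toLp 2 (Fin.append (WithLp.ofLp u) (Pi.single c √(1 - ‖u‖ ^ 2)))

lemma inner_padToUnit (u v : EuclideanSpace ℝ (Fin d)) (c c' : Fin 2) :
    inner ℝ (padToUnit u c) (padToUnit v c') = inner ℝ u v +
      if c = c' then √(1 - ‖u‖ ^ 2) * √(1 - ‖v‖ ^ 2) else 0 := by
  simp only [padToUnit, PiLp.inner_apply, Fin.sum_univ_add, Fin.append_left, Fin.append_right]
  congr 1
  fin_cases c <;> fin_cases c' <;> simp [Fin.sum_univ_two, mul_comm]

lemma norm_padToUnit {u : EuclideanSpace ℝ (Fin d)} (hu : ‖u‖ ≤ 1) (c : Fin 2) :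
    ‖padToUnit u c‖ = 1 := by
  have h : 0 ≤ 1 - ‖u‖ ^ 2 := by nlinarith [norm_nonneg u]
  rw [norm_eq_sqrt_real_inner, inner_padToUnit, if_pos rfl, real_inner_self_eq_norm_sq,
    Real.mul_self_sqrt h, add_sub_cancel, Real.sqrt_one]

end Padding

lemma norm_inv_smul_sum_le_one {E : Type*} [SeminormedAddCommGroup E] [NormedSpace ℝ E] {N : ℕ}
    (v : Fin N → E) (hv : ∀ s, ‖v s‖ ≤ 1) : ‖(N : ℝ)⁻¹ • ∑ s, v s‖ ≤ 1 := by
  rcases N.eq_zero_or_pos with rfl | hN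
  · simp
  have hsum : ‖∑ s, v s‖ ≤ N := by
    simpa using (norm_sum_le _ _).trans (Finset.sum_le_card_nsmul Finset.univ _ 1 fun s _ => hv s)
  rw [norm_smul, norm_inv, Real.norm_natCast, inv_mul_le_one₀ (by positivity)]
  exact hsum

def grothendieckValues {α β : Type*} [Fintype α] [Fintype β] (A : Matrix α β ℝ) : Set ℝ :=
  { r : ℝ | ∃ (k : ℕ) (p : α → EuclideanSpace ℝ (Fin k)) (q : β → EuclideanSpace ℝ (Fin k)),
    (∀ i, ‖p i‖ = 1) ∧ (∀ j, ‖q j‖ = 1) ∧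
    r = ∑ i, ∑ j, A i j * (inner ℝ (p i) (q j) : ℝ) }

lemma grothendieckNorm_eq_sSup {α β : Type*} [Fintype α] [Fintype β] (A : Matrix α β ℝ) :
    grothendieckNorm A = sSup (grothendieckValues A) :=
  rfl

lemma sum_mul_inner_mem_grothendieckValues {α β : Type*} [Fintype α] [Fintype β]
    (A : Matrix α β ℝ) {d : ℕ} {u : α → EuclideanSpace ℝ (Fin d)}
    {v : β → EuclideanSpace ℝ (Fin d)} (hu : ∀ i, ‖u i‖ ≤ 1) (hv : ∀ j, ‖v j‖ ≤ 1) :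
    ∑ i, ∑ j, A i j * inner ℝ (u i) (v j) ∈ grothendieckValues A :=
  ⟨d + 2, fun i => padToUnit (u i) 0, fun j => padToUnit (v j) 1,
    fun i => norm_padToUnit (hu i) 0, fun j => norm_padToUnit (hv j) 1,
    by simp [inner_padToUnit]⟩

section Split

variable {n m : ℕ} (A : Matrix (Fin n) (Fin m) ℝ) (k : Fin n → ℕ+) (l : Fin m → ℕ+)

lemma sum_splitMatrix_mul (f : (Σ i, Fin (k i : ℕ)) → (Σ j, Fin (l j : ℕ)) → ℝ) :
    ∑ x, ∑ y, splitMatrix A k l x y * f x y =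
      ∑ i, ∑ j, A i j * (((k i : ℕ) : ℝ)⁻¹ * ((l j : ℕ) : ℝ)⁻¹ *
        ∑ s : Fin (k i : ℕ), ∑ t : Fin (l j : ℕ), f ⟨i, s⟩ ⟨j, t⟩) := by
  simp only [Fintype.sum_sigma, splitMatrix, Finset.mul_sum]
  refine Finset.sum_congr rfl fun i _ => ?_
  rw [Finset.sum_comm]
  refine Finset.sum_congr rfl fun j _ => ?_
  refine Finset.sum_congr rfl fun s _ => Finset.sum_congr rfl fun t _ => ?_
  ring

lemma grothendieckValues_splitMatrix_subset :
    grothendieckValues (splitMatrix A k l) ⊆ grothendieckValues A := by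
  rintro _ ⟨d, p, q, hp, hq, rfl⟩
  have hinner : ∀ i j, inner ℝ (((k i : ℕ) : ℝ)⁻¹ • ∑ s : Fin (k i : ℕ), p ⟨i, s⟩)
      (((l j : ℕ) : ℝ)⁻¹ • ∑ t : Fin (l j : ℕ), q ⟨j, t⟩) =
        ((k i : ℕ) : ℝ)⁻¹ * ((l j : ℕ) : ℝ)⁻¹ *
          ∑ s : Fin (k i : ℕ), ∑ t : Fin (l j : ℕ), inner ℝ (p ⟨i, s⟩) (q ⟨j, t⟩) := by
    intro i j
    simp only [real_inner_smul_left, real_inner_smul_right, sum_inner, inner_sum]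
    rw [← Finset.mul_sum, Finset.sum_comm]
    ring
  rw [sum_splitMatrix_mul]
  simp only [← hinner]
  exact sum_mul_inner_mem_grothendieckValues A
    (fun i => norm_inv_smul_sum_le_one _ fun s => (hp _).le)
    (fun j => norm_inv_smul_sum_le_one _ fun t => (hq _).le)

lemma grothendieckValues_subset_splitMatrix :
    grothendieckValues A ⊆ grothendieckValues (splitMatrix A k l) := by
  rintro _ ⟨d, p, q, hp, hq, rfl⟩
  refine ⟨d, fun x => p x.1, fun y => q y.1, fun _ => hp _, fun _ => hq _, ?_⟩
  rw [sum_splitMatrix_mul]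
  refine Finset.sum_congr rfl fun i _ => Finset.sum_congr rfl fun j _ => ?_
  simp only [Finset.sum_const, Finset.card_univ, Fintype.card_fin, nsmul_eq_mul]
  field_simp

end Split

theorem grothendieckNorm_splitMatrix (n m : ℕ) (A : Matrix (Fin n) (Fin m) ℝ)
    (k : Fin n → ℕ+) (l : Fin m → ℕ+) :
    grothendieckNorm (splitMatrix A k l) = grothendieckNorm A := by
  rw [grothendieckNorm_eq_sSup, grothendieckNorm_eq_sSup,
    (grothendieckValues_splitMatrix_subset A k l).antisymm
      (grothendieckValues_subset_splitMatrix A k l)]
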